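/- arXiv:2409.19437 — 2 statements merged into one kernel-verified Lean document; each statement's English description precedes it below -/
import Mathlib

section
/- Aggregated advantage gap bound: for a finite sequence of policies π_0, ..., π_{k-1} on a finite discounted MDP and any state s, ∑_{t=0}^{k-1} (V^{π_t}(s) − V^{π*}(s)) ≤ (1/(1−γ)) · max_{s' ∈ S} max_{p ∈ Δ_{|A|}} {−∑_{t=0}^{k-1} ψ^{π_t}(s', p)}. -/
open scoped BigOperators

section MDP

variable {S A : Type*} [Fintype S] [Fintype A] [DecidableEq S]

/-- A (randomized stationary) policy: a probability distribution over actions at each state. -/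
def IsPolicy (π : S → A → ℝ) : Prop := ∀ s, π s ∈ stdSimplex ℝ A

/-- A transition kernel: a probability distribution over next states for each state-action pair. -/
def IsKernel (P : S → A → S → ℝ) : Prop := ∀ s a, P s a ∈ stdSimplex ℝ S

/-- The state-transition matrix induced by policy `π`:
`(polMatrix P π) q s' = Pr{s_{t+1} = s' | s_t = q}` under `a_t ∼ π(·|q)`. -/
noncomputable def polMatrix (P : S → A → S → ℝ) (π : S → A → ℝ) : Matrix S S ℝ :=
  Matrix.of fun q s' => ∑ a, π q a * P q a s'

/-- Discounted state-visitation distribution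
`κ^π_q(s) = (1-γ) ∑_{t=0}^∞ γ^t Pr^π{s_t = s | s_0 = q}`. -/
noncomputable def visit (P : S → A → S → ℝ) (γ : ℝ) (π : S → A → ℝ) (q s : S) : ℝ :=
  (1 - γ) * ∑' t : ℕ, γ ^ t * (polMatrix P π ^ t) q s

/-- State-value function: expected discounted sum of costs plus regularization,
`V^π(s) = ∑_{t=0}^∞ γ^t E[c(s_t,a_t) + h^{π(·|s_t)}(s_t) | s_0 = s]`. -/
noncomputable def valueV (P : S → A → S → ℝ) (c : S → A → ℝ) (h : S → (A → ℝ) → ℝ)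
    (γ : ℝ) (π : S → A → ℝ) (s : S) : ℝ :=
  ∑' t : ℕ, γ ^ t * ∑ q, (polMatrix P π ^ t) s q * ((∑ a, π q a * c q a) + h q (π q))

/-- Action-value function `Q^π(s,a) = c(s,a) + h^{π(·|s)}(s) + γ ∑_{s'} P(s'|s,a) V^π(s')`. -/
noncomputable def valueQ (P : S → A → S → ℝ) (c : S → A → ℝ) (h : S → (A → ℝ) → ℝ)
    (γ : ℝ) (π : S → A → ℝ) (s : S) (a : A) : ℝ :=
  c s a + h s (π s) + γ * ∑ s', P s a s' * valueV P c h γ π s'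

/-- Advantage function `ψ^π(s,p) = ⟨Q^π(s,·), p⟩ − V^π(s) + h^p(s) − h^{π(·|s)}(s)`. -/
noncomputable def adv (P : S → A → S → ℝ) (c : S → A → ℝ) (h : S → (A → ℝ) → ℝ)
    (γ : ℝ) (π : S → A → ℝ) (s : S) (p : A → ℝ) : ℝ :=
  (∑ a, valueQ P c h γ π s a * p a) - valueV P c h γ π s + h s p - h s (π s)

/-- Advantage gap function `g^π(s) = max_{p ∈ Δ_{|A|}} {−ψ^π(s,p)}`. -/
noncomputable def gapFn (P : S → A → S → ℝ) (c : S → A → ℝ) (h : S → (A → ℝ) → ℝ)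
    (γ : ℝ) (π : S → A → ℝ) (s : S) : ℝ :=
  sSup ((fun p => - adv P c h γ π s p) '' stdSimplex ℝ A)

end MDP


/-! ### Auxiliary infrastructure -/

section StochAux
variable {S : Type*} [Fintype S] [DecidableEq S]

/-- A row-stochastic matrix. -/
def IsStoch (M : Matrix S S ℝ) : Prop := (∀ i j, 0 ≤ M i j) ∧ ∀ i, ∑ j, M i j = 1

lemma IsStoch.pow {M : Matrix S S ℝ} (hM : IsStoch M) (t : ℕ) : IsStoch (M ^ t) := by
  induction t with
  | zero =>
    constructor
    · intro i j; simp [Matrix.one_apply]; positivity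
    · intro i; simp [Matrix.one_apply]
  | succ n ih =>
    rw [pow_succ]
    constructor
    · intro i j
      exact Finset.sum_nonneg fun q _ => mul_nonneg (ih.1 i q) (hM.1 q j)
    · intro i
      simp only [Matrix.mul_apply]
      rw [Finset.sum_comm]
      simp only [← Finset.mul_sum]
      simp [fun q => hM.2 q, ih.2 i]

omit [DecidableEq S] in
lemma IsStoch.entry_le_one {M : Matrix S S ℝ} (hM : IsStoch M) (i j : S) : M i j ≤ 1 :=
  (Finset.single_le_sum (fun q _ => hM.1 i q) (Finset.mem_univ j)).trans (hM.2 i).le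

omit [DecidableEq S] in
lemma IsStoch.dot_abs_le {M : Matrix S S ℝ} (hM : IsStoch M) (g : S → ℝ) (i : S) :
    |∑ q, M i q * g q| ≤ ∑ q, |g q| := by
  calc |∑ q, M i q * g q| ≤ ∑ q, |M i q * g q| := Finset.abs_sum_le_sum_abs _ _
  _ ≤ ∑ q, |g q| := by
      refine Finset.sum_le_sum fun q _ => ?_
      rw [abs_mul, abs_of_nonneg (hM.1 i q)]
      exact mul_le_of_le_one_left (abs_nonneg _) (hM.entry_le_one i q)

/-- The discounted evaluation operator `W g s = ∑ₜ γ^t (Mᵗ g)(s)`. -/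
noncomputable def Wop (M : Matrix S S ℝ) (γ : ℝ) (g : S → ℝ) (s : S) : ℝ :=
  ∑' t : ℕ, γ ^ t * ∑ q, (M ^ t) s q * g q

variable {M : Matrix S S ℝ} {γ : ℝ}

lemma summable_W (hM : IsStoch M) (hγ0 : 0 ≤ γ) (hγ1 : γ < 1) (g : S → ℝ) (s : S) :
    Summable (fun t : ℕ => γ ^ t * ∑ q, (M ^ t) s q * g q) := by
  refine Summable.of_norm_bounded (Summable.mul_right (∑ q, |g q|)
    (summable_geometric_of_lt_one hγ0 hγ1)) fun t => ?_
  rw [Real.norm_eq_abs, abs_mul, abs_pow, abs_of_nonneg hγ0]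
  exact mul_le_mul_of_nonneg_left ((hM.pow t).dot_abs_le g s) (pow_nonneg hγ0 t)

lemma summable_entry (hM : IsStoch M) (hγ0 : 0 ≤ γ) (hγ1 : γ < 1) (s q : S) :
    Summable (fun t : ℕ => γ ^ t * (M ^ t) s q) := by
  refine Summable.of_norm_bounded (summable_geometric_of_lt_one hγ0 hγ1) fun t => ?_
  rw [Real.norm_eq_abs, abs_mul, abs_pow, abs_of_nonneg hγ0,
    abs_of_nonneg ((hM.pow t).1 s q)]
  exact mul_le_of_le_one_right (pow_nonneg hγ0 t) ((hM.pow t).entry_le_one s q)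

lemma Wop_sub (hM : IsStoch M) (hγ0 : 0 ≤ γ) (hγ1 : γ < 1) (g₁ g₂ : S → ℝ) (s : S) :
    Wop M γ (fun q => g₁ q - g₂ q) s = Wop M γ g₁ s - Wop M γ g₂ s := by
  unfold Wop
  rw [← Summable.tsum_sub (summable_W hM hγ0 hγ1 g₁ s) (summable_W hM hγ0 hγ1 g₂ s)]
  congr 1; ext t
  simp only [mul_sub, Finset.sum_sub_distrib]

lemma Wop_shift (hM : IsStoch M) (hγ0 : 0 ≤ γ) (hγ1 : γ < 1) (g : S → ℝ) (s : S) :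
    Wop M γ (fun q => γ * ∑ p, M q p * g p) s = Wop M γ g s - g s := by
  have key : ∀ t : ℕ, γ ^ t * ∑ q, (M ^ t) s q * (γ * ∑ p, M q p * g p)
      = γ ^ (t+1) * ∑ q, (M ^ (t+1)) s q * g q := by
    intro t
    rw [show (M ^ (t+1)) = M ^ t * M from pow_succ M t]
    simp only [Matrix.mul_apply, Finset.sum_mul, Finset.mul_sum]
    rw [Finset.sum_comm]
    exact Finset.sum_congr rfl fun q _ => Finset.sum_congr rfl fun p _ => by ring
  unfold Wop
  simp only [key]
  have hs := summable_W hM hγ0 hγ1 g s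
  have h0 := Summable.tsum_eq_zero_add hs
  rw [h0]
  simp [Matrix.one_apply]

lemma Wop_sum (hM : IsStoch M) (hγ0 : 0 ≤ γ) (hγ1 : γ < 1) {ι : Type*} (F : Finset ι)
    (g : ι → S → ℝ) (s : S) :
    Wop M γ (fun q => ∑ i ∈ F, g i q) s = ∑ i ∈ F, Wop M γ (g i) s := by
  classical
  induction F using Finset.induction with
  | empty => simp [Wop]
  | insert a F' hnot ih =>
    rw [Finset.sum_insert hnot, ← ih]
    unfold Wop
    rw [← Summable.tsum_add (summable_W hM hγ0 hγ1 (g a) s) (summable_W hM hγ0 hγ1 _ s)]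
    congr 1; funext t
    simp [Finset.sum_insert hnot, mul_add, Finset.sum_add_distrib]

lemma Wop_eq_sum (hM : IsStoch M) (hγ0 : 0 ≤ γ) (hγ1 : γ < 1) (g : S → ℝ) (s : S) :
    Wop M γ g s = ∑ q, (∑' t : ℕ, γ ^ t * (M ^ t) s q) * g q := by
  unfold Wop
  have h1 : ∀ t : ℕ, γ ^ t * ∑ q, (M ^ t) s q * g q
      = ∑ q, (γ ^ t * (M ^ t) s q) * g q := by
    intro t; rw [Finset.mul_sum]; exact Finset.sum_congr rfl fun q _ => by ring
  simp only [h1]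
  rw [Summable.tsum_finsetSum fun q _ => ((summable_entry hM hγ0 hγ1 s q).mul_right (g q))]
  exact Finset.sum_congr rfl fun q _ => tsum_mul_right

end StochAux

/-- A convex function on the standard simplex is bounded below. -/
lemma convexOn_stdSimplex_bddBelow {A : Type*} [Fintype A] [Nonempty A]
    {f : (A → ℝ) → ℝ} (hf : ConvexOn ℝ (stdSimplex ℝ A) f) :
    ∃ L : ℝ, ∀ p ∈ stdSimplex ℝ A, L ≤ f p := by
  classical
  set n : ℕ := Fintype.card A with hn
  have hn1 : 1 ≤ n := Fintype.card_pos
  have hnR : (1:ℝ) ≤ (n:ℝ) := by exact_mod_cast hn1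
  have hnpos : (0:ℝ) < n := by linarith
  have hub : ∀ p ∈ stdSimplex ℝ A, f p ≤ Finset.univ.sup' Finset.univ_nonempty
      (fun a : A => f (fun j => if a = j then (1:ℝ) else 0)) := by
    intro p hp
    have hmem : p ∈ convexHull ℝ (Set.range fun i j : A => if i = j then (1:ℝ) else 0) := by
      rw [convexHull_basis_eq_stdSimplex]; exact hp
    obtain ⟨y, ⟨i, rfl⟩, hy⟩ := hf.exists_ge_of_mem_convexHull
      (by rw [← convexHull_basis_eq_stdSimplex]; exact subset_convexHull ℝ _) hmem
    exact hy.trans (Finset.le_sup'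
      (fun a : A => f (fun j => if a = j then (1:ℝ) else 0)) (Finset.mem_univ i))
  set Mmax : ℝ := Finset.univ.sup' Finset.univ_nonempty
    (fun a : A => f (fun j => if a = j then (1:ℝ) else 0)) with hM
  set b : A → ℝ := fun _ => (n:ℝ)⁻¹ with hb
  have hbmem : b ∈ stdSimplex ℝ A := by
    constructor
    · intro a; positivity
    · simp [hb, Finset.sum_const, Finset.card_univ, ← hn]
  set α : ℝ := ((n:ℝ)+1)⁻¹ with hα
  have hα0 : 0 < α := by positivity
  have hα1 : α < 1 := by rw [hα, inv_lt_one_iff₀]; right; linarith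
  have hαn : α ≤ (n:ℝ)⁻¹ := by
    apply inv_anti₀ hnpos; linarith
  have h1α : (0:ℝ) < 1 - α := by linarith
  refine ⟨α⁻¹ * (f b - (1 - α) * Mmax), ?_⟩
  intro p hp
  have hple : ∀ a, p a ≤ 1 := fun a =>
    (Finset.single_le_sum (fun i _ => hp.1 i) (Finset.mem_univ a)).trans hp.2.le
  set r : A → ℝ := fun a => (1 - α)⁻¹ * (b a - α * p a) with hr
  have hrmem : r ∈ stdSimplex ℝ A := by
    constructor
    · intro a
      apply mul_nonneg (inv_nonneg.mpr h1α.le)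
      have h2 : α * p a ≤ (n:ℝ)⁻¹ := by
        calc α * p a ≤ α * 1 := mul_le_mul_of_nonneg_left (hple a) hα0.le
        _ ≤ (n:ℝ)⁻¹ := by rwa [mul_one]
      simp only [hb]; linarith
    · rw [← Finset.mul_sum]
      have hsum : (∑ a, (b a - α * p a)) = 1 - α := by
        rw [Finset.sum_sub_distrib, ← Finset.mul_sum, hp.2, mul_one, hbmem.2]
      rw [hsum, inv_mul_cancel₀ (by linarith)]
  have hcomb : α • p + (1 - α) • r = b := by
    funext a
    simp only [Pi.add_apply, Pi.smul_apply, smul_eq_mul, hr]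
    rw [← mul_assoc, mul_inv_cancel₀ (by linarith : (1:ℝ) - α ≠ 0), one_mul]
    ring
  have hcvx := hf.2 hp hrmem hα0.le h1α.le (show α + (1 - α) = 1 by ring)
  rw [hcomb] at hcvx
  simp only [smul_eq_mul] at hcvx
  have hrM : f r ≤ Mmax := hub r hrmem
  rw [inv_mul_le_iff₀ hα0]
  nlinarith [mul_le_mul_of_nonneg_left hrM (by linarith : (0:ℝ) ≤ 1 - α)]

section MDPAux
variable {S A : Type*} [Fintype S] [Fintype A] [DecidableEq S]

lemma isStoch_polMatrix {P : S → A → S → ℝ} {π : S → A → ℝ}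
    (hP : IsKernel P) (hπ : IsPolicy π) : IsStoch (polMatrix P π) := by
  constructor
  · intro q s'
    exact Finset.sum_nonneg fun a _ => mul_nonneg ((hπ q).1 a) ((hP q a).1 s')
  · intro q
    unfold polMatrix
    simp only [Matrix.of_apply]
    rw [Finset.sum_comm]
    simp only [← Finset.mul_sum]
    calc ∑ a, π q a * ∑ s', P q a s' = ∑ a, π q a :=
          Finset.sum_congr rfl fun a _ => by rw [(hP q a).2, mul_one]
      _ = 1 := (hπ q).2

variable {P : S → A → S → ℝ} {c : S → A → ℝ} {h : S → (A → ℝ) → ℝ} {γ : ℝ}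
  {π πstar : S → A → ℝ}

lemma adv_at_policy (hstar : IsPolicy πstar) (q : S) :
    - adv P c h γ π q (πstar q)
      = (valueV P c h γ π q - ((∑ a, πstar q a * c q a) + h q (πstar q)))
        - (γ * ∑ p, polMatrix P πstar q p * valueV P c h γ π p) := by
  unfold adv valueQ polMatrix
  simp only [Matrix.of_apply, add_mul, Finset.sum_add_distrib, Finset.sum_mul,
    Finset.mul_sum]
  have h1 : (∑ x : A, h q (π q) * πstar q x) = h q (π q) := by
    rw [← Finset.mul_sum, (hstar q).2, mul_one]
  have h2 : (∑ x : A, ∑ i : S, γ * (P q x i * valueV P c h γ π i) * πstar q x)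
      = ∑ x : S, ∑ i : A, γ * (πstar q i * P q i x * valueV P c h γ π x) := by
    rw [Finset.sum_comm]
    exact Finset.sum_congr rfl fun s' _ => Finset.sum_congr rfl fun a _ => by ring
  have h3 : (∑ a, πstar q a * c q a) = ∑ a, c q a * πstar q a :=
    Finset.sum_congr rfl fun a _ => mul_comm _ _
  rw [h1, h2, h3]
  ring

/-- Performance difference lemma. -/
lemma pdl (hP : IsKernel P) (hπ : IsPolicy π) (hstar : IsPolicy πstar)
    (hγ0 : 0 ≤ γ) (hγ1 : γ < 1) (s : S) :
    valueV P c h γ π s - valueV P c h γ πstar s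
      = Wop (polMatrix P πstar) γ (fun q => - adv P c h γ π q (πstar q)) s := by
  have hM := isStoch_polMatrix hP hstar
  set M := polMatrix P πstar with hMd
  set V := valueV P c h γ π with hV
  set rstar : S → ℝ := fun q => (∑ a, πstar q a * c q a) + h q (πstar q) with hrs
  have key : Wop M γ (fun q => - adv P c h γ π q (πstar q)) s
      = V s - valueV P c h γ πstar s := by
    calc Wop M γ (fun q => - adv P c h γ π q (πstar q)) s
        = Wop M γ (fun q => (V q - rstar q) - (γ * ∑ p, M q p * V p)) s := by
          congr 1; funext q; exact adv_at_policy hstar q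
      _ = Wop M γ (fun q => V q - rstar q) s
          - Wop M γ (fun q => γ * ∑ p, M q p * V p) s := Wop_sub hM hγ0 hγ1 _ _ s
      _ = (Wop M γ V s - Wop M γ rstar s) - (Wop M γ V s - V s) := by
          rw [Wop_sub hM hγ0 hγ1, Wop_shift hM hγ0 hγ1]
      _ = V s - valueV P c h γ πstar s := by
          have hr : Wop M γ rstar s = valueV P c h γ πstar s := rfl
          rw [hr]; ring
  exact key.symm

lemma visit_nonneg (hP : IsKernel P) (hstar : IsPolicy πstar)
    (hγ0 : 0 ≤ γ) (hγ1 : γ < 1) (s q : S) : 0 ≤ visit P γ πstar s q :=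
  mul_nonneg (by linarith)
    (tsum_nonneg fun t => mul_nonneg (pow_nonneg hγ0 t)
      (((isStoch_polMatrix hP hstar).pow t).1 s q))

lemma visit_sum (hP : IsKernel P) (hstar : IsPolicy πstar)
    (hγ0 : 0 ≤ γ) (hγ1 : γ < 1) (s : S) : ∑ q, visit P γ πstar s q = 1 := by
  have hM := isStoch_polMatrix hP hstar
  unfold visit
  rw [← Finset.mul_sum,
    ← Summable.tsum_finsetSum (fun q (_ : q ∈ Finset.univ) => summable_entry hM hγ0 hγ1 s q)]
  have h1 : ∀ t : ℕ, (∑ q, γ ^ t * (polMatrix P πstar ^ t) s q) = γ ^ t := by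
    intro t; rw [← Finset.mul_sum, (hM.pow t).2, mul_one]
  simp only [h1]
  rw [tsum_geometric_of_lt_one hγ0 hγ1, mul_inv_cancel₀ (by linarith)]

lemma Wop_eq_visit (hP : IsKernel P) (hstar : IsPolicy πstar)
    (hγ0 : 0 ≤ γ) (hγ1 : γ < 1) (g : S → ℝ) (s : S) :
    Wop (polMatrix P πstar) γ g s
      = (1 - γ)⁻¹ * ∑ q, visit P γ πstar s q * g q := by
  have hM := isStoch_polMatrix hP hstar
  rw [Wop_eq_sum hM hγ0 hγ1, Finset.mul_sum]
  refine Finset.sum_congr rfl fun q _ => ?_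
  unfold visit
  rw [← mul_assoc, ← mul_assoc, inv_mul_cancel₀ (by linarith : (1:ℝ) - γ ≠ 0), one_mul]

lemma bdd_gap [Nonempty A] {k : ℕ} {π : ℕ → S → A → ℝ}
    (hconv : ∀ s : S, ConvexOn ℝ (stdSimplex ℝ A) (h s)) (q : S) :
    BddAbove ((fun p => - ∑ t ∈ Finset.range k, adv P c h γ (π t) q p) ''
      stdSimplex ℝ A) := by
  obtain ⟨L, hL⟩ := convexOn_stdSimplex_bddBelow (hconv q)
  refine ⟨∑ t ∈ Finset.range k, ((∑ a, |valueQ P c h γ (π t) q a|)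
    + valueV P c h γ (π t) q - L + h q (π t q)), ?_⟩
  rintro x ⟨p, hp, rfl⟩
  have hple : ∀ a, p a ≤ 1 := fun a =>
    (Finset.single_le_sum (fun i _ => hp.1 i) (Finset.mem_univ a)).trans hp.2.le
  show (- ∑ t ∈ Finset.range k, adv P c h γ (π t) q p) ≤ _
  rw [← Finset.sum_neg_distrib]
  refine Finset.sum_le_sum fun t _ => ?_
  unfold adv
  have h2 : L ≤ h q p := hL p hp
  have h3 : -(∑ a, valueQ P c h γ (π t) q a * p a)
      ≤ ∑ a, |valueQ P c h γ (π t) q a| := by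
    calc -(∑ a, valueQ P c h γ (π t) q a * p a)
        ≤ |∑ a, valueQ P c h γ (π t) q a * p a| := neg_le_abs _
      _ ≤ ∑ a, |valueQ P c h γ (π t) q a * p a| := Finset.abs_sum_le_sum_abs _ _
      _ ≤ ∑ a, |valueQ P c h γ (π t) q a| := by
          refine Finset.sum_le_sum fun a _ => ?_
          rw [abs_mul, abs_of_nonneg (hp.1 a)]
          exact mul_le_of_le_one_right (abs_nonneg _) (hple a)
  linarith

end MDPAux
theorem aggregated_gap_bound {S A : Type*} [Fintype S] [Fintype A] [DecidableEq S]
    [Nonempty S]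
    (P : S → A → S → ℝ) (c : S → A → ℝ) (h : S → (A → ℝ) → ℝ) (γ : ℝ)
    (π : ℕ → S → A → ℝ) (πstar : S → A → ℝ) (k : ℕ)
    (hP : IsKernel P) (hπ : ∀ t, IsPolicy (π t)) (hstar : IsPolicy πstar)
    (hγ0 : 0 ≤ γ) (hγ1 : γ < 1)
    (hconv : ∀ s : S, ConvexOn ℝ (stdSimplex ℝ A) (h s))
    (hopt : ∀ π'' : S → A → ℝ, IsPolicy π'' →
      ∀ s : S, valueV P c h γ πstar s ≤ valueV P c h γ π'' s) :
    ∀ s : S,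
      ∑ t ∈ Finset.range k, (valueV P c h γ (π t) s - valueV P c h γ πstar s) ≤
        (1 / (1 - γ)) *
          Finset.univ.sup' Finset.univ_nonempty (fun s' : S =>
            sSup ((fun p => - ∑ t ∈ Finset.range k, adv P c h γ (π t) s' p) ''
              stdSimplex ℝ A)) := by
  classical
  intro s
  have hA : Nonempty A := by
    by_contra hne
    rw [not_nonempty_iff] at hne
    have h2 := (hstar (Classical.arbitrary S)).2
    rw [Finset.univ_eq_empty, Finset.sum_empty] at h2
    exact zero_ne_one h2
  have hM := isStoch_polMatrix hP hstar
  set B := Finset.univ.sup' Finset.univ_nonempty (fun s' : S =>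
    sSup ((fun p => - ∑ t ∈ Finset.range k, adv P c h γ (π t) s' p) ''
      stdSimplex ℝ A)) with hB
  have key : ∑ t ∈ Finset.range k,
        (valueV P c h γ (π t) s - valueV P c h γ πstar s)
      = (1 - γ)⁻¹ * ∑ q, visit P γ πstar s q *
          (- ∑ t ∈ Finset.range k, adv P c h γ (π t) q (πstar q)) := by
    calc ∑ t ∈ Finset.range k, (valueV P c h γ (π t) s - valueV P c h γ πstar s)
        = ∑ t ∈ Finset.range k,
            Wop (polMatrix P πstar) γ (fun q => - adv P c h γ (π t) q (πstar q)) s :=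
          Finset.sum_congr rfl fun t _ => pdl hP (hπ t) hstar hγ0 hγ1 s
      _ = Wop (polMatrix P πstar) γ
            (fun q => ∑ t ∈ Finset.range k, - adv P c h γ (π t) q (πstar q)) s :=
          (Wop_sum hM hγ0 hγ1 _ _ s).symm
      _ = (1 - γ)⁻¹ * ∑ q, visit P γ πstar s q *
            (- ∑ t ∈ Finset.range k, adv P c h γ (π t) q (πstar q)) := by
          rw [Wop_eq_visit hP hstar hγ0 hγ1]
          simp only [Finset.sum_neg_distrib]
  rw [key, one_div]
  refine mul_le_mul_of_nonneg_left ?_ (inv_nonneg.mpr (by linarith))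
  have hGB : ∀ q : S,
      (- ∑ t ∈ Finset.range k, adv P c h γ (π t) q (πstar q)) ≤ B := by
    intro q
    have h1 : (- ∑ t ∈ Finset.range k, adv P c h γ (π t) q (πstar q))
        ≤ sSup ((fun p => - ∑ t ∈ Finset.range k, adv P c h γ (π t) q p) ''
            stdSimplex ℝ A) :=
      le_csSup (bdd_gap hconv q) ⟨πstar q, hstar q, rfl⟩
    exact h1.trans (Finset.le_sup' (fun s' : S =>
      sSup ((fun p => - ∑ t ∈ Finset.range k, adv P c h γ (π t) s' p) ''
        stdSimplex ℝ A)) (Finset.mem_univ q))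
  calc ∑ q, visit P γ πstar s q *
        (- ∑ t ∈ Finset.range k, adv P c h γ (π t) q (πstar q))
      ≤ ∑ q, visit P γ πstar s q * B :=
        Finset.sum_le_sum fun q _ =>
          mul_le_mul_of_nonneg_left (hGB q) (visit_nonneg hP hstar hγ0 hγ1 s q)
    _ = B := by
        rw [← Finset.sum_mul, visit_sum hP hstar hγ0 hγ1 s, one_mul]
end

section
/- Greedy policy upper bound: under the hypotheses of the non-optimal action detection lemma, letting (s̄, ā) be the identified non-optimal pair w.r.t. a non-optimal policy π_0, any policy π satisfies π(ā|s̄) ≤ (|S||A|/((1−γ)ρ(s̄))) · (f_ρ(π) − f_ρ(π*))/(f_ρ(π_0) − f_ρ(π*)). -/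
open scoped BigOperators

section Aux
set_option linter.unusedSectionVars false

variable {S A : Type*} [Fintype S] [Fintype A] [DecidableEq S]

lemma polMatrix_nonneg {P : S → A → S → ℝ} {π : S → A → ℝ}
    (hP : IsKernel P) (hπ : IsPolicy π) (s q : S) : 0 ≤ polMatrix P π s q :=
  Finset.sum_nonneg fun a _ => mul_nonneg ((hπ s).1 a) ((hP s a).1 q)

lemma polMatrix_row_sum {P : S → A → S → ℝ} {π : S → A → ℝ}
    (hP : IsKernel P) (hπ : IsPolicy π) (s : S) : ∑ q, polMatrix P π s q = 1 := by
  have h : ∑ q, polMatrix P π s q = ∑ a, π s a * ∑ q, P s a q := by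
    unfold polMatrix
    simp only [Matrix.of_apply, Finset.mul_sum]
    exact Finset.sum_comm
  rw [h]
  simp only [fun a => (hP s a).2, mul_one]
  exact (hπ s).2

lemma polMatrix_pow_nonneg {P : S → A → S → ℝ} {π : S → A → ℝ}
    (hP : IsKernel P) (hπ : IsPolicy π) (t : ℕ) (s q : S) :
    0 ≤ (polMatrix P π ^ t) s q := by
  induction t generalizing s q with
  | zero => simp [Matrix.one_apply]; split <;> norm_num
  | succ t ih =>
    rw [pow_succ, Matrix.mul_apply]
    exact Finset.sum_nonneg fun p _ => mul_nonneg (ih s p) (polMatrix_nonneg hP hπ p q)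

lemma polMatrix_pow_row_sum {P : S → A → S → ℝ} {π : S → A → ℝ}
    (hP : IsKernel P) (hπ : IsPolicy π) (t : ℕ) (s : S) :
    ∑ q, (polMatrix P π ^ t) s q = 1 := by
  induction t generalizing s with
  | zero => simp [Matrix.one_apply]
  | succ t ih =>
    simp only [pow_succ, Matrix.mul_apply]
    rw [Finset.sum_comm]
    have : ∀ p, ∑ q, (polMatrix P π ^ t) s p * polMatrix P π p q
        = (polMatrix P π ^ t) s p := by
      intro p; rw [← Finset.mul_sum, polMatrix_row_sum hP hπ, mul_one]
    simp only [this]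
    exact ih s

lemma summable_aux {P : S → A → S → ℝ} {π : S → A → ℝ} {γ : ℝ}
    (hP : IsKernel P) (hπ : IsPolicy π) (hγ0 : 0 ≤ γ) (hγ1 : γ < 1)
    (r : S → ℝ) (s : S) :
    Summable (fun t : ℕ => γ ^ t * ∑ q, (polMatrix P π ^ t) s q * r q) := by
  have hC : ∀ t, ‖γ ^ t * ∑ q, (polMatrix P π ^ t) s q * r q‖ ≤ γ ^ t * ∑ q, |r q| := by
    intro t
    rw [Real.norm_eq_abs, abs_mul, abs_pow, abs_of_nonneg hγ0]
    gcongr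
    calc |∑ q, (polMatrix P π ^ t) s q * r q| ≤ ∑ q, |(polMatrix P π ^ t) s q * r q| :=
          Finset.abs_sum_le_sum_abs _ _
      _ ≤ ∑ q, |r q| := by
          apply Finset.sum_le_sum
          intro q _
          rw [abs_mul, abs_of_nonneg (polMatrix_pow_nonneg hP hπ t s q)]
          have h1 : (polMatrix P π ^ t) s q ≤ 1 := by
            calc (polMatrix P π ^ t) s q ≤ ∑ q', (polMatrix P π ^ t) s q' :=
                  Finset.single_le_sum (fun q' _ => polMatrix_pow_nonneg hP hπ t s q')
                    (Finset.mem_univ q)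
              _ = 1 := polMatrix_pow_row_sum hP hπ t s
          nlinarith [abs_nonneg (r q)]
  exact Summable.of_norm_bounded ((summable_geometric_of_lt_one hγ0 hγ1).mul_right _) hC

lemma valueV_eq {P : S → A → S → ℝ} {π : S → A → ℝ} {γ : ℝ} (c : S → A → ℝ) (s : S) :
    valueV P c (fun _ _ => 0) γ π s
      = ∑' t : ℕ, γ ^ t * ∑ q, (polMatrix P π ^ t) s q * (∑ a, π q a * c q a) := by
  simp [valueV]

lemma bellman {P : S → A → S → ℝ} {π : S → A → ℝ} {γ : ℝ}
    (hP : IsKernel P) (hπ : IsPolicy π) (hγ0 : 0 ≤ γ) (hγ1 : γ < 1)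
    (c : S → A → ℝ) (s : S) :
    valueV P c (fun _ _ => 0) γ π s
      = (∑ a, π s a * c s a)
        + γ * ∑ q, polMatrix P π s q * valueV P c (fun _ _ => 0) γ π q := by
  set r : S → ℝ := fun q => ∑ a, π q a * c q a with hr
  have hsum : ∀ p, Summable (fun t : ℕ => γ ^ t * ∑ q, (polMatrix P π ^ t) p q * r q) :=
    fun p => summable_aux hP hπ hγ0 hγ1 r p
  rw [valueV_eq c s, Summable.tsum_eq_zero_add (hsum s)]
  have h0 : γ ^ 0 * ∑ q, (polMatrix P π ^ 0) s q * r q = r s := by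
    simp [Matrix.one_apply]
  rw [h0]
  congr 1
  have hstep : ∀ t : ℕ, γ ^ (t + 1) * ∑ q, (polMatrix P π ^ (t + 1)) s q * r q
      = ∑ p, polMatrix P π s p * (γ * (γ ^ t * ∑ q, (polMatrix P π ^ t) p q * r q)) := by
    intro t
    have hmm : ∑ q, (polMatrix P π ^ (t + 1)) s q * r q
        = ∑ p, polMatrix P π s p * ∑ q, (polMatrix P π ^ t) p q * r q := by
      simp only [pow_succ', Matrix.mul_apply, Finset.sum_mul, Finset.mul_sum]
      rw [Finset.sum_comm]
      apply Finset.sum_congr rfl; intro p _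
      apply Finset.sum_congr rfl; intro q _
      ring
    rw [hmm, Finset.mul_sum]
    apply Finset.sum_congr rfl; intro p _
    ring
  simp only [hstep]
  rw [Summable.tsum_finsetSum (fun p _ => (((hsum p).mul_left γ).mul_left (polMatrix P π s p)))]
  rw [Finset.mul_sum]
  apply Finset.sum_congr rfl; intro p _
  rw [tsum_mul_left, tsum_mul_left, ← valueV_eq c p]
  ring


lemma value_le_of_subsolution {P : S → A → S → ℝ} {π : S → A → ℝ} {γ : ℝ}
    (hP : IsKernel P) (hπ : IsPolicy π) (hγ0 : 0 ≤ γ) (hγ1 : γ < 1)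
    (c : S → A → ℝ) (u : S → ℝ) [Nonempty S]
    (hu : ∀ s, (∑ a, π s a * c s a) + γ * ∑ p, polMatrix P π s p * u p ≤ u s) :
    ∀ s, valueV P c (fun _ _ => 0) γ π s ≤ u s := by
  set V : S → ℝ := fun s => valueV P c (fun _ _ => 0) γ π s with hV
  set w : S → ℝ := fun s => u s - V s with hw
  have hkey : ∀ s, γ * ∑ p, polMatrix P π s p * w p ≤ w s := by
    intro s
    have hb := bellman hP hπ hγ0 hγ1 c s
    have hsub : ∑ p, polMatrix P π s p * w p
        = ∑ p, polMatrix P π s p * u p - ∑ p, polMatrix P π s p * V p := by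
      rw [← Finset.sum_sub_distrib]
      apply Finset.sum_congr rfl; intro p _; simp [hw]; ring
    have := hu s
    simp only [hw]
    rw [hsub]
    simp only [hV] at hb ⊢
    linarith
  obtain ⟨s0, _, hs0⟩ := Finset.exists_min_image Finset.univ w ⟨Classical.arbitrary S,
    Finset.mem_univ _⟩
  have hws0 : 0 ≤ w s0 := by
    have h1 : γ * (w s0) ≤ γ * ∑ p, polMatrix P π s0 p * w p := by
      apply mul_le_mul_of_nonneg_left _ hγ0
      calc w s0 = ∑ p, polMatrix P π s0 p * w s0 := by
            rw [← Finset.sum_mul, polMatrix_row_sum hP hπ, one_mul]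
        _ ≤ ∑ p, polMatrix P π s0 p * w p := by
            apply Finset.sum_le_sum; intro p _
            exact mul_le_mul_of_nonneg_left (hs0 p (Finset.mem_univ p))
              (polMatrix_nonneg hP hπ s0 p)
    have h2 := hkey s0
    nlinarith
  intro s
  have := hs0 s (Finset.mem_univ s)
  simp only [hw] at this hws0
  linarith

lemma valueV_le_valueQ {P : S → A → S → ℝ} {πstar : S → A → ℝ} {γ : ℝ} {c : S → A → ℝ}
    (hP : IsKernel P) (hstar : IsPolicy πstar) (hγ0 : 0 ≤ γ) (hγ1 : γ < 1)
    (hopt : ∀ π'' : S → A → ℝ, IsPolicy π'' →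
      ∀ s : S, valueV P c (fun _ _ => 0) γ πstar s ≤ valueV P c (fun _ _ => 0) γ π'' s)
    (q : S) (a : A) :
    valueV P c (fun _ _ => 0) γ πstar q ≤ valueQ P c (fun _ _ => 0) γ πstar q a := by
  classical
  by_contra hlt
  push_neg at hlt
  have : Nonempty S := ⟨q⟩
  set Vs : S → ℝ := fun s => valueV P c (fun _ _ => 0) γ πstar s with hVs
  set δ : ℝ := Vs q - valueQ P c (fun _ _ => 0) γ πstar q a with hδ
  have hδpos : 0 < δ := by simp only [hδ, hVs]; linarith
  set π'' : S → A → ℝ := fun s' => if s' = q then (fun a' => if a' = a then 1 else 0)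
    else πstar s' with hπ''def
  have hπ'' : IsPolicy π'' := by
    intro s'
    by_cases h : s' = q
    · subst h
      simp only [hπ''def, if_pos rfl]
      constructor
      · intro x; dsimp only; split <;> norm_num
      · simp
    · simp only [hπ''def, if_neg h]
      exact hstar s'
  set u : S → ℝ := fun s' => Vs s' - if s' = q then δ else 0 with hu
  have hM'' : ∀ p, polMatrix P π'' q p = P q a p := by
    intro p
    simp only [polMatrix, Matrix.of_apply, hπ''def, if_pos rfl]
    simp [Finset.sum_ite_eq']
  have hMeq : ∀ s', s' ≠ q → ∀ p, polMatrix P π'' s' p = polMatrix P πstar s' p := by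
    intro s' hs' p
    simp only [polMatrix, Matrix.of_apply, hπ''def, if_neg hs']
  have hQ : valueQ P c (fun _ _ => 0) γ πstar q a
      = c q a + γ * ∑ s', P q a s' * Vs s' := by
    simp [valueQ, hVs]
  have hsub : ∀ s', (∑ a', π'' s' a' * c s' a')
      + γ * ∑ p, polMatrix P π'' s' p * u p ≤ u s' := by
    intro s'
    by_cases h : s' = q
    · subst h
      have hr : (∑ a', π'' s' a' * c s' a') = c s' a := by
        simp only [hπ''def, if_pos rfl]
        simp [Finset.sum_ite_eq']
      rw [hr]
      have hsum : ∑ p, polMatrix P π'' s' p * u p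
          = (∑ p, P s' a p * Vs p) - P s' a s' * δ := by
        simp only [hM'', hu]
        have hpt : ∀ p, P s' a p * (Vs p - if p = s' then δ else 0)
            = P s' a p * Vs p - (if p = s' then P s' a p * δ else 0) := by
          intro p; by_cases hp : p = s' <;> simp [hp, mul_sub]
        simp only [hpt]
        rw [Finset.sum_sub_distrib]
        congr 1
        simp [Finset.sum_ite_eq']
      rw [hsum]
      have hPnn : 0 ≤ P s' a s' := (hP s' a).1 s'
      have : u s' = Vs s' - δ := by simp [hu]
      rw [this]
      have : Vs s' - δ = valueQ P c (fun _ _ => 0) γ πstar s' a := by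
        simp only [hδ]; ring
      rw [this, hQ]
      nlinarith [mul_nonneg (mul_nonneg hγ0 hPnn) hδpos.le]
    · have hr : (∑ a', π'' s' a' * c s' a') = ∑ a', πstar s' a' * c s' a' := by
        simp only [hπ''def, if_neg h]
      rw [hr]
      have hsum : ∑ p, polMatrix P π'' s' p * u p
          = (∑ p, polMatrix P πstar s' p * Vs p) - polMatrix P πstar s' q * δ := by
        simp only [hMeq s' h, hu]
        have hpt : ∀ p, polMatrix P πstar s' p * (Vs p - if p = q then δ else 0)
            = polMatrix P πstar s' p * Vs p
              - (if p = q then polMatrix P πstar s' p * δ else 0) := by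
          intro p; by_cases hp : p = q <;> simp [hp, mul_sub]
        simp only [hpt]
        rw [Finset.sum_sub_distrib]
        congr 1
        simp [Finset.sum_ite_eq']
      rw [hsum]
      have hb := bellman hP hstar hγ0 hγ1 c s'
      have hMnn : 0 ≤ polMatrix P πstar s' q := polMatrix_nonneg hP hstar s' q
      have : u s' = Vs s' := by simp [hu, h]
      rw [this]
      simp only [← hVs] at hb
      nlinarith [mul_nonneg (mul_nonneg hγ0 hMnn) hδpos.le]
  have hle := value_le_of_subsolution hP hπ'' hγ0 hγ1 c u hsub q
  have hge : Vs q ≤ valueV P c (fun _ _ => 0) γ π'' q := hopt π'' hπ'' q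
  have hle' : valueV P c (fun _ _ => 0) γ π'' q ≤ Vs q - δ := by
    simpa [hu] using hle
  linarith
end Aux

/-- Greedy policy upper bound: with `(s̄,ā)` the non-optimal pair identified w.r.t. a
non-optimal policy `π_0` (so `π_0(ā|s̄) > 0`, `π*(ā|s̄) = 0`, and
`A^{π*}(s̄,ā) ≥ ((1−γ)/(|S||A|))(f_ρ(π_0) − f_ρ(π*)) > 0`), every policy `π` satisfies
`π(ā|s̄) ≤ (|S||A|/((1−γ)ρ(s̄))) · (f_ρ(π) − f_ρ(π*))/(f_ρ(π_0) − f_ρ(π*))`. -/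
theorem greedy_policy_upper_bound {S A : Type*} [Fintype S] [Fintype A] [DecidableEq S]
    (P : S → A → S → ℝ) (c : S → A → ℝ) (γ : ℝ) (ρ : S → ℝ)
    (π0 πstar π : S → A → ℝ) (sb : S) (ab : A)
    (hP : IsKernel P) (hπ0 : IsPolicy π0) (hstar : IsPolicy πstar) (hπ : IsPolicy π)
    (hγ0 : 0 ≤ γ) (hγ1 : γ < 1)
    (hρpos : ∀ s : S, 0 < ρ s) (hρ1 : ∑ s : S, ρ s = 1)
    (hopt : ∀ π'' : S → A → ℝ, IsPolicy π'' →
      ∀ s : S, valueV P c (fun _ _ => 0) γ πstar s ≤ valueV P c (fun _ _ => 0) γ π'' s)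
    (hgap0 : 0 < ∑ s : S, ρ s * valueV P c (fun _ _ => 0) γ π0 s -
      ∑ s : S, ρ s * valueV P c (fun _ _ => 0) γ πstar s)
    (hsb_pos : 0 < π0 sb ab) (hsb_zero : πstar sb ab = 0)
    (hA : ((1 - γ) / ((Fintype.card S : ℝ) * (Fintype.card A : ℝ))) *
        (∑ s : S, ρ s * valueV P c (fun _ _ => 0) γ π0 s -
          ∑ s : S, ρ s * valueV P c (fun _ _ => 0) γ πstar s) ≤
      valueQ P c (fun _ _ => 0) γ πstar sb ab - valueV P c (fun _ _ => 0) γ πstar sb) :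
    π sb ab ≤
      ((Fintype.card S : ℝ) * (Fintype.card A : ℝ) / ((1 - γ) * ρ sb)) *
        ((∑ s : S, ρ s * valueV P c (fun _ _ => 0) γ π s -
            ∑ s : S, ρ s * valueV P c (fun _ _ => 0) γ πstar s) /
          (∑ s : S, ρ s * valueV P c (fun _ _ => 0) γ π0 s -
            ∑ s : S, ρ s * valueV P c (fun _ _ => 0) γ πstar s)) := by
  classical
  set V : S → ℝ := fun s => valueV P c (fun _ _ => 0) γ πstar s with hV
  set W : S → ℝ := fun s => valueV P c (fun _ _ => 0) γ π s with hW
  set Qb : ℝ := valueQ P c (fun _ _ => 0) γ πstar sb ab with hQb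
  -- Bellman expansion for π at sb
  have hQdef : ∀ a, valueQ P c (fun _ _ => 0) γ πstar sb a
      = c sb a + γ * ∑ q, P sb a q * V q := by
    intro a; simp [valueQ, hV]
  have hWexp : W sb = ∑ a, π sb a * (c sb a + γ * ∑ q, P sb a q * W q) := by
    have hb := bellman hP hπ hγ0 hγ1 c sb
    have hswap : γ * ∑ q, polMatrix P π sb q * W q
        = ∑ a, π sb a * (γ * ∑ q, P sb a q * W q) := by
      simp only [polMatrix, Matrix.of_apply, Finset.sum_mul, Finset.mul_sum]
      rw [Finset.sum_comm]
      apply Finset.sum_congr rfl; intro a _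
      apply Finset.sum_congr rfl; intro q _
      ring
    rw [show (∑ a, π sb a * (c sb a + γ * ∑ q, P sb a q * W q))
        = (∑ a, π sb a * c sb a) + ∑ a, π sb a * (γ * ∑ q, P sb a q * W q) by
      rw [← Finset.sum_add_distrib]
      apply Finset.sum_congr rfl; intro a _; ring]
    rw [← hswap]
    exact hb
  have hVleW : ∀ s, V s ≤ W s := fun s => hopt π hπ s
  have h1 : ∑ a, π sb a * valueQ P c (fun _ _ => 0) γ πstar sb a ≤ W sb := by
    rw [hWexp]
    apply Finset.sum_le_sum; intro a _
    apply mul_le_mul_of_nonneg_left _ ((hπ sb).1 a)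
    rw [hQdef]
    have : ∑ q, P sb a q * V q ≤ ∑ q, P sb a q * W q :=
      Finset.sum_le_sum fun q _ => mul_le_mul_of_nonneg_left (hVleW q) ((hP sb a).1 q)
    nlinarith
  have hQgeV : ∀ a, V sb ≤ valueQ P c (fun _ _ => 0) γ πstar sb a :=
    fun a => valueV_le_valueQ hP hstar hγ0 hγ1 hopt sb a
  have h2 : π sb ab * (Qb - V sb) ≤ ∑ a, π sb a * valueQ P c (fun _ _ => 0) γ πstar sb a
      - V sb := by
    have hsplit : ∑ a, π sb a * valueQ P c (fun _ _ => 0) γ πstar sb a - V sb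
        = ∑ a, π sb a * (valueQ P c (fun _ _ => 0) γ πstar sb a - V sb) := by
      rw [show (∑ a, π sb a * (valueQ P c (fun _ _ => 0) γ πstar sb a - V sb))
          = (∑ a, π sb a * valueQ P c (fun _ _ => 0) γ πstar sb a)
            - ∑ a, π sb a * V sb by
        rw [← Finset.sum_sub_distrib]
        apply Finset.sum_congr rfl; intro a _; ring]
      rw [← Finset.sum_mul, (hπ sb).2, one_mul]
    rw [hsplit]
    exact Finset.single_le_sum
      (fun a _ => mul_nonneg ((hπ sb).1 a) (sub_nonneg.mpr (hQgeV a)))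
      (Finset.mem_univ ab)
  have key1 : π sb ab * (Qb - V sb) ≤ W sb - V sb := by linarith
  -- aggregate over states
  set E : ℝ := (∑ s, ρ s * W s) - ∑ s, ρ s * V s with hE
  have hEeq : E = ∑ s, ρ s * (W s - V s) := by
    rw [hE, ← Finset.sum_sub_distrib]
    apply Finset.sum_congr rfl; intro s _; ring
  have hEb : ρ sb * (W sb - V sb) ≤ E := by
    rw [hEeq]
    exact Finset.single_le_sum
      (fun s _ => mul_nonneg (hρpos s).le (sub_nonneg.mpr (hVleW s)))
      (Finset.mem_univ sb)
  set D : ℝ := (∑ s, ρ s * valueV P c (fun _ _ => 0) γ π0 s) - ∑ s, ρ s * V s with hD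
  have hDpos : 0 < D := hgap0
  set N : ℝ := (Fintype.card S : ℝ) * (Fintype.card A : ℝ) with hN
  have hNpos : 0 < N := by
    have h1 : 0 < Fintype.card S := Fintype.card_pos_iff.mpr ⟨sb⟩
    have h2 : 0 < Fintype.card A := Fintype.card_pos_iff.mpr ⟨ab⟩
    rw [hN]
    exact mul_pos (by exact_mod_cast h1) (by exact_mod_cast h2)
  have hAd : (1 - γ) * D ≤ N * (Qb - V sb) := by
    have := hA
    rw [div_mul_eq_mul_div, div_le_iff₀ hNpos] at this
    linarith [this]
  have hπnn : 0 ≤ π sb ab := (hπ sb).1 ab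
  have hρb : 0 < ρ sb := hρpos sb
  have hγpos : 0 < 1 - γ := by linarith
  rw [div_mul_div_comm, le_div_iff₀ (by positivity)]
  calc π sb ab * ((1 - γ) * ρ sb * D)
      = (π sb ab * ρ sb) * ((1 - γ) * D) := by ring
    _ ≤ (π sb ab * ρ sb) * (N * (Qb - V sb)) :=
        mul_le_mul_of_nonneg_left hAd (mul_nonneg hπnn hρb.le)
    _ = N * (ρ sb * (π sb ab * (Qb - V sb))) := by ring
    _ ≤ N * (ρ sb * (W sb - V sb)) := by
        apply mul_le_mul_of_nonneg_left _ hNpos.le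
        exact mul_le_mul_of_nonneg_left key1 hρb.le
    _ ≤ N * E := mul_le_mul_of_nonneg_left hEb hNpos.le
end
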